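/- Bounds for the lower-level auxiliary function h⁻ (estimates (h-lower) and (h-upper)): Let m ≥ 1, β := (m−1)/m, k > 0 and μ₋ ≥ 0. Then for every v with μ₋ ≤ v ≤ μ₋ + k: (1/(2m)) (μ₋ + k)^{−β} (μ₋ + k − v)² ≤ (1/m) ∫_{v}^{μ₋ + k} (μ₋ + k − σ) σ^{−β} dσ ≤ k ( (μ₋ + k)^{1/m} − v^{1/m} ) ≤ k (μ₋ + k)^{−β} (μ₋ + k − v). -/

import Mathlib

open MeasureTheory Set
open scoped ENNReal NNReal

noncomputable section

abbrev Rd (d : ℕ) := EuclideanSpace ℝ (Fin d)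

/-- The open ball `K_ρ ⊆ ℝ^d` centered at the origin. -/
def Kball (d : ℕ) (ρ : ℝ) : Set (Rd d) := Metric.ball 0 ρ

/-- The unit parabolic cylinder `Q₁ = K₁ × (−1,0]`. -/
def Q1S (d : ℕ) : Set (Rd d × ℝ) := (Kball d 1) ×ˢ Set.Ioc (-1 : ℝ) 0

/-- Spatial partial derivative in direction `i`. -/
def pd (d : ℕ) (f : Rd d → ℝ) (i : Fin d) (x : Rd d) : ℝ :=
  fderiv ℝ f x (EuclideanSpace.single i 1)

/-- Laplacian of a scalar function on `ℝ^d`. -/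
def lap (d : ℕ) (f : Rd d → ℝ) (x : Rd d) : ℝ :=
  ∑ i, pd d (fun y => pd d f i y) i x

/-- Divergence of a vector field on `ℝ^d`. -/
def divg (d : ℕ) (F : Rd d → Rd d) (x : Rd d) : ℝ :=
  ∑ i, pd d (fun y => F y i) i x

/-- Mixed norm `L^p_t L^q_x` on `A × I`. -/
def mixedNorm {d : ℕ} {E : Type*} [NormedAddCommGroup E]
    (p q : ℝ≥0∞) (f : Rd d → ℝ → E) (A : Set (Rd d)) (I : Set ℝ) : ℝ≥0∞ :=
  eLpNorm (fun t => (eLpNorm (fun x => f x t) q (volume.restrict A)).toReal)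
    p (volume.restrict I)

/-- `B` is a `C¹` vector field on `Q₁`. -/
def IsC1VF (d : ℕ) (B : Rd d → ℝ → Rd d) : Prop :=
  ContDiffOn ℝ 1 (fun p : Rd d × ℝ => B p.1 p.2) (Q1S d)

/-- A positive classical solution of `∂ₜ u = Δ(u^m) + ∇·(B u)` on `A × I`. -/
def IsClassicalSolU (d : ℕ) (m : ℝ) (B : Rd d → ℝ → Rd d)
    (u : Rd d → ℝ → ℝ) (A : Set (Rd d)) (I : Set ℝ) : Prop :=
  (∀ x ∈ A, ∀ t ∈ I, 0 < u x t) ∧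
  ContinuousOn (fun p : Rd d × ℝ => u p.1 p.2) (closure (A ×ˢ I)) ∧
  (∀ t ∈ I, ContDiffOn ℝ 2 (fun x => u x t) A) ∧
  (∀ x ∈ A, ∀ t ∈ I, DifferentiableAt ℝ (fun s => u x s) t) ∧
  (∀ x ∈ A, ∀ t ∈ I,
    deriv (fun s => u x s) t
      = lap d (fun y => u y t ^ m) x + divg d (fun y => u y t • B y t) x)

/-- A positive classical solution of `∂ₜ(v^{1/m}) = Δv + ∇·(B v^{1/m})` on `A × I`. -/
def IsClassicalSolV (d : ℕ) (m : ℝ) (B : Rd d → ℝ → Rd d)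
    (v : Rd d → ℝ → ℝ) (A : Set (Rd d)) (I : Set ℝ) : Prop :=
  (∀ x ∈ A, ∀ t ∈ I, 0 < v x t) ∧
  ContinuousOn (fun p : Rd d × ℝ => v p.1 p.2) (closure (A ×ˢ I)) ∧
  (∀ t ∈ I, ContDiffOn ℝ 2 (fun x => v x t) A) ∧
  (∀ x ∈ A, ∀ t ∈ I, DifferentiableAt ℝ (fun s => v x s ^ (1/m)) t) ∧
  (∀ x ∈ A, ∀ t ∈ I,
    deriv (fun s => v x s ^ (1/m)) t
      = lap d (fun y => v y t) x + divg d (fun y => (v y t ^ (1/m)) • B y t) x)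

/-- Supremum of `v` over a space-time set. -/
def supOn (d : ℕ) (v : Rd d → ℝ → ℝ) (S : Set (Rd d × ℝ)) : ℝ :=
  sSup ((fun p : Rd d × ℝ => v p.1 p.2) '' S)

/-- Infimum of `v` over a space-time set. -/
def infOn (d : ℕ) (v : Rd d → ℝ → ℝ) (S : Set (Rd d × ℝ)) : ℝ :=
  sInf ((fun p : Rd d × ℝ => v p.1 p.2) '' S)

/-- Oscillation of `v` over a space-time set. -/
def oscOn (d : ℕ) (v : Rd d → ℝ → ℝ) (S : Set (Rd d × ℝ)) : ℝ :=
  supOn d v S - infOn d v S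

/-- The time interval of the intrinsic cylinder `Q_{k,ρ}(θ)`. -/
def ITime (m k ρ θ : ℝ) : Set ℝ := Set.Ioc (-(θ * k ^ (-((m - 1) / m)) * ρ ^ 2)) 0

/-- The intrinsic cylinder `Q_{k,ρ}(θ) = K_ρ × (−θ k^{−β} ρ², 0]`. -/
def QIntr (d : ℕ) (m k ρ θ : ℝ) : Set (Rd d × ℝ) := Kball d ρ ×ˢ ITime m k ρ θ

/-- The exponent `q = 2 q̂ (1+κ)/(q̂ − 1)` (with value `2(1+κ)` when `q̂ = ∞`). -/
def qdual (qh : ℝ≥0∞) (κ : ℝ) : ℝ :=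
  if qh = ∞ then 2 * (1 + κ) else 2 * qh.toReal * (1 + κ) / (qh.toReal - 1)

/-! On `[v, a]`, `a = μ₋ + k`, the weight `σ ^ (-β)` is at least `a ^ (-β)` (it decreases) and
`0 ≤ a - σ ≤ k`; integrating, with `∫ σ ^ (-β) = m (a ^ (1/m) - v ^ (1/m))`, gives the first two
bounds. The third is concavity of `σ ^ (1/m)`: `a ^ (-β) v ≤ v ^ (-β) v = v ^ (1/m)` while
`a ^ (-β) a = a ^ (1/m)`. -/

namespace Real

theorem intervalIntegrable_sub_mul_rpow {r a v : ℝ} (hr : -1 < r) :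
    IntervalIntegrable (fun σ => (a - σ) * σ ^ r) volume v a :=
  (intervalIntegral.intervalIntegrable_rpow' hr).continuousOn_mul (by fun_prop)

theorem rpow_mul_sq_sub_div_two_le_integral_sub_mul_rpow {r a v : ℝ} (hr : -1 < r) (hr0 : r ≤ 0)
    (hv : 0 ≤ v) (hva : v ≤ a) :
    a ^ r * ((a - v) ^ 2 / 2) ≤ ∫ σ in v..a, (a - σ) * σ ^ r :=
  calc a ^ r * ((a - v) ^ 2 / 2) = ∫ σ in v..a, (a - σ) * a ^ r := by
        simp only [intervalIntegral.integral_mul_const, intervalIntegral.integral_comp_sub_left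
          (fun σ => σ), sub_self, integral_id]
        ring
    _ ≤ ∫ σ in v..a, (a - σ) * σ ^ r := by
        refine intervalIntegral.integral_mono_on_of_le_Ioo hva
          (Continuous.intervalIntegrable (by fun_prop) _ _)
          (intervalIntegrable_sub_mul_rpow hr) fun σ hσ => ?_
        exact mul_le_mul_of_nonneg_left (rpow_le_rpow_of_nonpos (hv.trans_lt hσ.1) hσ.2.le hr0)
          (sub_nonneg.2 hσ.2.le)

theorem integral_sub_mul_rpow_le {r a v k : ℝ} (hr : -1 < r) (hv : 0 ≤ v) (hva : v ≤ a)
    (hk : a - v ≤ k) :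
    ∫ σ in v..a, (a - σ) * σ ^ r ≤ k * ((a ^ (r + 1) - v ^ (r + 1)) / (r + 1)) :=
  calc ∫ σ in v..a, (a - σ) * σ ^ r ≤ ∫ σ in v..a, k * σ ^ r := by
        refine intervalIntegral.integral_mono_on hva (intervalIntegrable_sub_mul_rpow hr)
          ((intervalIntegral.intervalIntegrable_rpow' hr).const_mul k) fun σ hσ => ?_
        exact mul_le_mul_of_nonneg_right (by linarith [hσ.1]) (rpow_nonneg (hv.trans hσ.1) r)
    _ = k * ((a ^ (r + 1) - v ^ (r + 1)) / (r + 1)) := by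
        rw [intervalIntegral.integral_const_mul, integral_rpow (Or.inl hr)]

theorem rpow_add_one_sub_rpow_add_one_le {r a v : ℝ} (hr : r ≤ 0) (hv : 0 ≤ v) (hva : v ≤ a) :
    a ^ (r + 1) - v ^ (r + 1) ≤ a ^ r * (a - v) := by
  rcases hva.eq_or_lt with rfl | hva
  · simp
  have hv_le : a ^ r * v ≤ v ^ (r + 1) := by
    rcases hv.eq_or_lt with rfl | hv
    · simpa using rpow_nonneg le_rfl (r + 1)
    calc a ^ r * v ≤ v ^ r * v :=
          mul_le_mul_of_nonneg_right (rpow_le_rpow_of_nonpos hv hva.le hr) hv.le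
      _ = v ^ (r + 1) := (rpow_add_one hv.ne' r).symm
  have ha : a ^ (r + 1) = a ^ r * a := rpow_add_one (hv.trans_lt hva).ne' r
  rw [ha, mul_sub]
  linarith

end Real

open Real

theorem hminus_bounds_general
    (m : ℝ) (hm : 1 ≤ m) (k μm : ℝ) (hμ : 0 ≤ μm)
    (v : ℝ) (hv1 : μm ≤ v) (hv2 : v ≤ μm + k) :
    (1 / (2 * m) * (μm + k) ^ (-((m - 1) / m)) * (μm + k - v) ^ 2
        ≤ (1 / m) * ∫ σ in v..(μm + k), (μm + k - σ) * σ ^ (-((m - 1) / m))) ∧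
    ((1 / m) * ∫ σ in v..(μm + k), (μm + k - σ) * σ ^ (-((m - 1) / m)))
        ≤ k * ((μm + k) ^ (1 / m) - v ^ (1 / m)) ∧
    k * ((μm + k) ^ (1 / m) - v ^ (1 / m))
        ≤ k * (μm + k) ^ (-((m - 1) / m)) * (μm + k - v) := by
  have hm0 : 0 < m := by linarith
  set r := -((m - 1) / m)
  have hr : -1 < r := by rw [neg_lt_neg_iff, div_lt_one hm0]; linarith
  have hr0 : r ≤ 0 := neg_nonpos.2 (div_nonneg (by linarith) hm0.le)
  have hr1 : r + 1 = 1 / m := by simp only [r]; field_simp; ring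
  have hv : 0 ≤ v := hμ.trans hv1
  refine ⟨?_, ?_, ?_⟩
  · calc 1 / (2 * m) * (μm + k) ^ r * (μm + k - v) ^ 2
          = 1 / m * ((μm + k) ^ r * ((μm + k - v) ^ 2 / 2)) := by ring
      _ ≤ _ := by gcongr; exact rpow_mul_sq_sub_div_two_le_integral_sub_mul_rpow hr hr0 hv hv2
  · calc 1 / m * ∫ σ in v..(μm + k), (μm + k - σ) * σ ^ r
          ≤ 1 / m * (k * (((μm + k) ^ (r + 1) - v ^ (r + 1)) / (r + 1))) := by
            gcongr; exact integral_sub_mul_rpow_le hr hv hv2 (by linarith)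
      _ = _ := by rw [hr1]; field_simp
  · rw [mul_assoc, ← hr1]
    exact mul_le_mul_of_nonneg_left (rpow_add_one_sub_rpow_add_one_le hr0 hv hv2) (by linarith)

/-- bounds for the lower-level auxiliary function `h⁻`. -/
theorem hminus_bounds
    (m : ℝ) (hm : 1 ≤ m) (k μm : ℝ) (hk : 0 < k) (hμ : 0 ≤ μm)
    (v : ℝ) (hv1 : μm ≤ v) (hv2 : v ≤ μm + k) :
    (1 / (2 * m) * (μm + k) ^ (-((m - 1) / m)) * (μm + k - v) ^ 2
        ≤ (1 / m) * ∫ σ in v..(μm + k), (μm + k - σ) * σ ^ (-((m - 1) / m))) ∧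
    ((1 / m) * ∫ σ in v..(μm + k), (μm + k - σ) * σ ^ (-((m - 1) / m)))
        ≤ k * ((μm + k) ^ (1 / m) - v ^ (1 / m)) ∧
    k * ((μm + k) ^ (1 / m) - v ^ (1 / m))
        ≤ k * (μm + k) ^ (-((m - 1) / m)) * (μm + k - v) :=
  hminus_bounds_general m hm k μm hμ v hv1 hv2

end
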